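/- arXiv:2201.06252 — 3 statements merged into one kernel-verified Lean document; each statement's English description precedes it below -/
import Mathlib

section
/- Let (S₀, φ) be a common induced subgraph matching of (G₀, G₁) with p ∈ S₀ and q = φ(p). Let A ⊆ V₀ be a finite set of leaves of G₀ attached to p, and let g : V₀ → V₁ be injective on A with every element of g(A) a leaf of G₁ attached to q. Then there exists a common induced subgraph matching (S₀', ψ) of (G₀, G₁) such that |S₀'| ≥ |S₀|, p ∈ S₀', ψ(p) = q, A ⊆ S₀', and ψ agrees with g on A. (That is, matching unmatched leaves of p to unmatched leaves of q never decreases the size of the best attainable common induced subgraph containing the pair (p, q).) -/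
/-- `(S₀, φ)` is a common induced subgraph matching of `(G₀, G₁)`:
`φ` is injective on `S₀` and preserves adjacency and non-adjacency on `S₀`. -/
def IsCommonMatching {V₀ V₁ : Type*} (G₀ : SimpleGraph V₀) (G₁ : SimpleGraph V₁)
    (S₀ : Finset V₀) (φ : V₀ → V₁) : Prop :=
  Set.InjOn φ ↑S₀ ∧ ∀ u ∈ S₀, ∀ v ∈ S₀, (G₀.Adj u v ↔ G₁.Adj (φ u) (φ v))

/-- `ℓ` is a leaf of `G` attached to `p`: `ℓ ≠ p`, `ℓ` is adjacent to `p`,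
and `p` is the unique neighbor of `ℓ`. -/
def IsLeafAt {V : Type*} (G : SimpleGraph V) (p ℓ : V) : Prop :=
  ℓ ≠ p ∧ G.Adj ℓ p ∧ ∀ x, G.Adj ℓ x → x = p

theorem leaf_union_match_no_loss {V₀ V₁ : Type*} [DecidableEq V₀] [DecidableEq V₁]
    (G₀ : SimpleGraph V₀) (G₁ : SimpleGraph V₁)
    (S₀ : Finset V₀) (φ : V₀ → V₁)
    (hmatch : IsCommonMatching G₀ G₁ S₀ φ)
    (p : V₀) (hp : p ∈ S₀) (q : V₁) (hq : q = φ p)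
    (A : Finset V₀) (hAleaf : ∀ a ∈ A, IsLeafAt G₀ p a)
    (g : V₀ → V₁) (hginj : Set.InjOn g ↑A)
    (hgleaf : ∀ a ∈ A, IsLeafAt G₁ q (g a)) :
    ∃ (S₀' : Finset V₀) (ψ : V₀ → V₁),
      IsCommonMatching G₀ G₁ S₀' ψ ∧
        S₀.card ≤ S₀'.card ∧
        p ∈ S₀' ∧ ψ p = q ∧
        A ⊆ S₀' ∧ ∀ a ∈ A, ψ a = g a := by
  classical
  obtain ⟨hφinj, hadj⟩ := hmatch
  -- basic facts about leaves
  have hpA : p ∉ A := fun h => (hAleaf p h).1 rfl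
  have hAadj : ∀ a ∈ A, ∀ v, (G₀.Adj a v ↔ v = p) := by
    intro a ha v
    exact ⟨(hAleaf a ha).2.2 v, by rintro rfl; exact (hAleaf a ha).2.1⟩
  have hgadj : ∀ a ∈ A, ∀ w, (G₁.Adj (g a) w ↔ w = q) := by
    intro a ha w
    exact ⟨(hgleaf a ha).2.2 w, by rintro rfl; exact (hgleaf a ha).2.1⟩
  have hqg : q ∉ A.image g := by
    simp only [Finset.mem_image, not_exists]
    rintro a ⟨ha, hgaq⟩
    exact (hgleaf a ha).1 hgaq
  -- the collision set C and the free-target set F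
  set AS : Finset V₀ := A ∩ S₀ with hAS
  set C : Finset V₀ := S₀.filter (fun s => s ∉ A ∧ φ s ∈ A.image g) with hCdef
  set F : Finset V₁ := (AS.image φ) \ (A.image g) with hFdef
  have hCS : C ⊆ S₀ := Finset.filter_subset _ _
  have hCmem : ∀ c, c ∈ C ↔ c ∈ S₀ ∧ c ∉ A ∧ φ c ∈ A.image g := by
    intro c; simp [hCdef, Finset.mem_filter, and_assoc]
  have hASS : AS ⊆ S₀ := Finset.inter_subset_right
  have hASA : AS ⊆ A := Finset.inter_subset_left
  have hpC : p ∉ C := by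
    intro h
    exact hqg (by rw [hq]; exact ((hCmem p).1 h).2.2)
  -- cardinality bookkeeping
  have hcardC : (C.image φ).card = C.card :=
    Finset.card_image_of_injOn (hφinj.mono (by exact_mod_cast hCS))
  have hcardAS : (AS.image φ).card = AS.card :=
    Finset.card_image_of_injOn (hφinj.mono (by exact_mod_cast hASS))
  have hcardgA : (A.image g).card = A.card := Finset.card_image_of_injOn hginj
  have hφCsub : C.image φ ⊆ (A.image g) \ (AS.image φ) := by
    intro y hy
    obtain ⟨c, hc, rfl⟩ := Finset.mem_image.1 hy
    obtain ⟨hcS, hcA, hcg⟩ := (hCmem c).1 hc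
    refine Finset.mem_sdiff.2 ⟨hcg, ?_⟩
    intro hmem
    obtain ⟨a, ha, hac⟩ := Finset.mem_image.1 hmem
    exact hcA (hASA (by rwa [hφinj (by exact_mod_cast hASS ha) (by exact_mod_cast hcS) hac] at ha))
  have e1 : ((A.image g) \ (AS.image φ)).card + ((A.image g) ∩ (AS.image φ)).card
      = (A.image g).card := Finset.card_sdiff_add_card_inter _ _
  have e2 : F.card + ((AS.image φ) ∩ (A.image g)).card = (AS.image φ).card := by
    rw [hFdef]; exact Finset.card_sdiff_add_card_inter _ _
  have e4 : ((A.image g) ∩ (AS.image φ)).card = ((AS.image φ) ∩ (A.image g)).card := by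
    rw [Finset.inter_comm]
  have e3 : AS.card + (A \ S₀).card = A.card := by
    rw [hAS]; exact Finset.card_inter_add_card_sdiff _ _
  have hCle : C.card ≤ (A \ S₀).card + F.card := by
    have h1 : (C.image φ).card ≤ ((A.image g) \ (AS.image φ)).card :=
      Finset.card_le_card hφCsub
    omega
  -- choose the subset C' of C that we keep (remapped), and the injection e into F
  obtain ⟨C', hC'sub, hC'card⟩ :=
    Finset.exists_subset_card_eq (le_min_iff.1 (le_refl (min C.card F.card))).1
  have hC'F : C'.card ≤ F.card := hC'card ▸ min_le_right _ _
  have : Nonempty V₁ := ⟨q⟩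
  obtain ⟨e, hemaps, heinj⟩ :=
    Set.Finite.exists_injOn_of_encard_le (C'.finite_toSet)
      (by
        rw [Set.encard_coe_eq_coe_finsetCard, Set.encard_coe_eq_coe_finsetCard]
        exact_mod_cast hC'F : (↑C' : Set V₀).encard ≤ (↑F : Set V₁).encard)
  have heF : ∀ c ∈ C', e c ∈ F := fun c hc => by exact_mod_cast hemaps (by exact_mod_cast hc)
  have heAS : ∀ c ∈ C', ∃ a, a ∈ A ∧ a ∈ S₀ ∧ φ a = e c ∧ e c ∉ A.image g := by
    intro c hc
    have h := heF c hc
    rw [hFdef, Finset.mem_sdiff] at h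
    obtain ⟨a, ha, hac⟩ := Finset.mem_image.1 h.1
    have := Finset.mem_inter.1 ha
    exact ⟨a, this.1, this.2, hac, h.2⟩
  have hpC' : p ∉ C' := fun h => hpC (hC'sub h)
  -- the new matching
  set ψ : V₀ → V₁ := fun v => if v ∈ A then g v else if v ∈ C' then e v else φ v with hψdef
  set S₀' : Finset V₀ := (S₀ \ (C \ C')) ∪ A with hS₀'
  have hψA : ∀ a ∈ A, ψ a = g a := by intro a ha; simp [hψdef, ha]
  have hψC' : ∀ c, c ∉ A → c ∈ C' → ψ c = e c := by intro c h1 h2; simp [hψdef, h1, h2]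
  have hψR : ∀ v, v ∉ A → v ∉ C' → ψ v = φ v := by intro v h1 h2; simp [hψdef, h1, h2]
  have hψp : ψ p = q := by rw [hψR p hpA hpC', hq]
  have htri : ∀ v ∈ S₀', v ∈ A ∨ (v ∉ A ∧ v ∈ C') ∨
      (v ∉ A ∧ v ∉ C' ∧ v ∈ S₀ ∧ v ∉ C) := by
    intro v hv
    by_cases hvA : v ∈ A
    · exact Or.inl hvA
    · rcases Finset.mem_union.1 hv with h | h
      · obtain ⟨hvS, hvnC⟩ := Finset.mem_sdiff.1 h
        by_cases hvC' : v ∈ C'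
        · exact Or.inr (Or.inl ⟨hvA, hvC'⟩)
        · refine Or.inr (Or.inr ⟨hvA, hvC', hvS, ?_⟩)
          intro hvC
          exact hvnC (Finset.mem_sdiff.2 ⟨hvC, hvC'⟩)
      · exact absurd h hvA
  have hC'S : ∀ c ∈ C', c ∈ S₀ := fun c hc => hCS (hC'sub hc)
  have hC'A : ∀ c ∈ C', c ∉ A := fun c hc => ((hCmem c).1 (hC'sub hc)).2.1
  -- characterization: ψ v = q ↔ v = p on S₀'
  have hψq : ∀ v ∈ S₀', (ψ v = q ↔ v = p) := by
    intro v hv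
    constructor
    · intro hvq
      rcases htri v hv with hvA | ⟨hvA, hvC'⟩ | ⟨hvA, hvC', hvS, _⟩
      · rw [hψA v hvA] at hvq
        exact absurd hvq (hgleaf v hvA).1
      · rw [hψC' v hvA hvC'] at hvq
        obtain ⟨a, haA, haS, hae, hng⟩ := heAS v hvC'
        rw [← hae, hq] at hvq
        exact absurd (hφinj (by exact_mod_cast haS) (by exact_mod_cast hp) hvq ▸ haA) hpA
      · rw [hψR v hvA hvC', hq] at hvq
        exact hφinj (by exact_mod_cast hvS) (by exact_mod_cast hp) hvq
    · rintro rfl; exact hψp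
  -- G₀-adjacency characterization for leaf-like vertices
  have hCadj : ∀ c ∈ S₀, φ c ∈ A.image g → ∀ v ∈ S₀, (G₀.Adj c v ↔ v = p) := by
    intro c hcS hcg v hvS
    obtain ⟨a, haA, hga⟩ := Finset.mem_image.1 hcg
    rw [hadj c hcS v hvS, ← hga, hgadj a haA, hq]
    exact ⟨fun h => hφinj (by exact_mod_cast hvS) (by exact_mod_cast hp) h,
      fun h => by rw [h]⟩
  have hK0 : ∀ u, (u ∈ A ∨ (u ∉ A ∧ u ∈ C')) → ∀ v ∈ S₀', (G₀.Adj u v ↔ v = p) := by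
    rintro u (huA | ⟨huA, huC'⟩) v hv
    · exact hAadj u huA v
    · obtain ⟨huS, _, hug⟩ := (hCmem u).1 (hC'sub huC')
      rcases htri v hv with hvA | ⟨_, hvC'⟩ | ⟨_, _, hvS, _⟩
      · refine iff_of_false ?_ (fun h => hpA (h ▸ hvA))
        intro h
        have hup : u = p := (hAadj v hvA u).1 h.symm
        exact hpC (hup ▸ hC'sub huC')
      · exact hCadj u huS hug v (hC'S v hvC')
      · exact hCadj u huS hug v hvS
  -- G₁-adjacency characterization for leaf-like vertices
  have hK1 : ∀ u, (u ∈ A ∨ (u ∉ A ∧ u ∈ C')) → ∀ v ∈ S₀',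
      (G₁.Adj (ψ u) (ψ v) ↔ v = p) := by
    rintro u (huA | ⟨huA, huC'⟩) v hv
    · rw [hψA u huA, hgadj u huA]
      exact hψq v hv
    · obtain ⟨a, haA, haS, hae, hng⟩ := heAS u huC'
      rw [hψC' u huA huC', ← hae]
      have hap : a ≠ p := fun h => hpA (h ▸ haA)
      rcases htri v hv with hvA | ⟨hvA, hvC'⟩ | ⟨hvA, hvC', hvS, _⟩
      · rw [hψA v hvA]
        refine iff_of_false ?_ (fun h => hpA (h ▸ hvA))
        intro h
        have : φ a = q := (hgadj v hvA (φ a)).1 h.symm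
        exact hap (hφinj (by exact_mod_cast haS) (by exact_mod_cast hp) (hq ▸ this))
      · obtain ⟨a₁, ha₁A, ha₁S, ha₁e, _⟩ := heAS v hvC'
        rw [hψC' v hvA hvC', ← ha₁e, ← hadj a haS a₁ ha₁S, hAadj a haA]
        exact iff_of_false (fun h => hpA (h ▸ ha₁A)) (fun h => hpC' (h ▸ hvC'))
      · rw [hψR v hvA hvC', ← hadj a haS v hvS, hAadj a haA]
  -- injectivity of ψ on S₀'
  have hψinj : Set.InjOn ψ ↑S₀' := by
    intro u hu v hv huv
    have hu' : u ∈ S₀' := by exact_mod_cast hu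
    have hv' : v ∈ S₀' := by exact_mod_cast hv
    have key : ∀ x ∈ S₀', ∀ y ∈ S₀', ψ x = ψ y → x ∈ A →
        (y ∈ A ∨ (y ∉ A ∧ y ∈ C') ∨ (y ∉ A ∧ y ∉ C' ∧ y ∈ S₀ ∧ y ∉ C)) → x = y := by
      intro x hx y hy hxy hxA hycases
      rcases hycases with hyA | ⟨hyA, hyC'⟩ | ⟨hyA, hyC', hyS, hyC⟩
      · rw [hψA x hxA, hψA y hyA] at hxy
        exact hginj (by exact_mod_cast hxA) (by exact_mod_cast hyA) hxy
      · rw [hψA x hxA, hψC' y hyA hyC'] at hxy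
        obtain ⟨a, _, _, _, hng⟩ := heAS y hyC'
        exact absurd (hxy ▸ Finset.mem_image_of_mem g hxA) hng
      · rw [hψA x hxA, hψR y hyA hyC'] at hxy
        exact absurd ((hCmem y).2 ⟨hyS, hyA, hxy ▸ Finset.mem_image_of_mem g hxA⟩) hyC
    rcases htri u hu' with huA | ⟨huA, huC'⟩ | ⟨huA, huC', huS, huC⟩
    · exact key u hu' v hv' huv huA (htri v hv')
    · rcases htri v hv' with hvA | ⟨hvA, hvC'⟩ | ⟨hvA, hvC', hvS, hvC⟩
      · exact (key v hv' u hu' huv.symm hvA (htri u hu')).symm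
      · rw [hψC' u huA huC', hψC' v hvA hvC'] at huv
        exact heinj (by exact_mod_cast huC') (by exact_mod_cast hvC') huv
      · rw [hψC' u huA huC', hψR v hvA hvC'] at huv
        obtain ⟨a, haA, haS, hae, _⟩ := heAS u huC'
        rw [← hae] at huv
        exact absurd
          ((hφinj (by exact_mod_cast haS) (by exact_mod_cast hvS) huv) ▸ haA) hvA
    · rcases htri v hv' with hvA | ⟨hvA, hvC'⟩ | ⟨hvA, hvC', hvS, hvC⟩
      · exact (key v hv' u hu' huv.symm hvA (htri u hu')).symm
      · rw [hψR u huA huC', hψC' v hvA hvC'] at huv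
        obtain ⟨a, haA, haS, hae, _⟩ := heAS v hvC'
        rw [← hae] at huv
        have h : u = a := hφinj (by exact_mod_cast huS) (by exact_mod_cast haS) huv
        exact absurd (h ▸ haA) huA
      · rw [hψR u huA huC', hψR v hvA hvC'] at huv
        exact hφinj (by exact_mod_cast huS) (by exact_mod_cast hvS) huv
  -- adjacency preservation
  have hψadj : ∀ u ∈ S₀', ∀ v ∈ S₀', (G₀.Adj u v ↔ G₁.Adj (ψ u) (ψ v)) := by
    intro u hu v hv
    by_cases hu1 : u ∈ A ∨ (u ∉ A ∧ u ∈ C')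
    · exact (hK0 u hu1 v hv).trans (hK1 u hu1 v hv).symm
    · by_cases hv1 : v ∈ A ∨ (v ∉ A ∧ v ∈ C')
      · rw [G₀.adj_comm, G₁.adj_comm]
        exact (hK0 v hv1 u hu).trans (hK1 v hv1 u hu).symm
      · rcases htri u hu with h | h | ⟨huA, huC', huS, _⟩
        · exact absurd (Or.inl h) hu1
        · exact absurd (Or.inr h) hu1
        rcases htri v hv with h | h | ⟨hvA, hvC', hvS, _⟩
        · exact absurd (Or.inl h) hv1
        · exact absurd (Or.inr h) hv1
        rw [hψR u huA huC', hψR v hvA hvC']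
        exact hadj u huS v hvS
  -- cardinality
  have hcard : S₀.card ≤ S₀'.card := by
    have hsub : (S₀ \ (C \ C')) ∪ (A \ S₀) ⊆ S₀' := by
      rw [hS₀']
      exact Finset.union_subset_union (le_refl _) Finset.sdiff_subset
    have hdisj : Disjoint (S₀ \ (C \ C')) (A \ S₀) := by
      rw [Finset.disjoint_left]
      intro x hx hx'
      exact (Finset.mem_sdiff.1 hx').2 (Finset.mem_sdiff.1 hx).1
    have h1 : (S₀ \ (C \ C')).card + (A \ S₀).card ≤ S₀'.card := by
      rw [← Finset.card_union_of_disjoint hdisj]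
      exact Finset.card_le_card hsub
    have h2 : (S₀ \ (C \ C')).card = S₀.card - (C \ C').card :=
      Finset.card_sdiff_of_subset (fun x hx => hCS (Finset.mem_sdiff.1 hx).1)
    have h3 : (C \ C').card = C.card - C'.card := Finset.card_sdiff_of_subset hC'sub
    have h4 : (C \ C').card ≤ S₀.card :=
      Finset.card_le_card (fun x hx => hCS (Finset.mem_sdiff.1 hx).1)
    omega
  refine ⟨S₀', ψ, ⟨hψinj, hψadj⟩, hcard, ?_, hψp, Finset.subset_union_right, hψA⟩
  exact Finset.mem_union_left _ (Finset.mem_sdiff.2 ⟨hp,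
    fun h => hpC (Finset.mem_sdiff.1 h).1⟩)
end

section
/- Let V₀ and V₁ be finite vertex types and let (S₀, φ) be a common induced subgraph matching of (G₀, G₁). For each function c : S₀ → Bool let Lcell(c) = {v ∈ V₀ \ S₀ : λ(v) = c} and Rcell(c) = {w ∈ V₁ \ φ(S₀) : μ(w) = c}. Then every common induced subgraph matching (S₀', ψ) extending (S₀, φ) (i.e., S₀ ⊆ S₀' and ψ agrees with φ on S₀) satisfies |S₀'| ≤ |S₀| + Σ_{c : S₀ → Bool} min(|Lcell(c)|, |Rcell(c)|). (This is the soundness of the bidomain upper bound overEstimate(𝒟) = Σ_{⟨V_l,V_r⟩∈𝒟} min(|V_l|,|V_r|) used for pruning.) -/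
open Finset

theorem Finset.card_le_sum_min_of_mapsTo_cells {α β γ : Type*} [Fintype γ] [DecidableEq γ]
    {s : Finset α} {f : α → β} (hf : Set.InjOn f s) (lab : α → γ)
    (L : γ → Finset α) (R : γ → Finset β)
    (hL : ∀ v ∈ s, v ∈ L (lab v)) (hR : ∀ v ∈ s, f v ∈ R (lab v)) :
    #s ≤ ∑ c, min #(L c) #(R c) := by
  rw [card_eq_sum_card_fiberwise (f := lab) (t := univ) fun v _ => mem_coe.2 (mem_univ _)]
  refine sum_le_sum fun c _ => le_min (card_le_card fun v hv => ?_) ?_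
  · obtain ⟨hvs, rfl⟩ := mem_filter.1 hv
    exact hL v hvs
  · refine card_le_card_of_injOn f (fun v hv => ?_) (hf.mono fun v hv => ?_)
    · obtain ⟨hvs, rfl⟩ := mem_filter.1 (mem_coe.1 hv)
      exact hR v hvs
    · exact (mem_filter.1 hv).1

section Extension

variable {V₀ V₁ : Type*} {G₀ : SimpleGraph V₀} {G₁ : SimpleGraph V₁}
  {S₀ S₀' : Finset V₀} {φ ψ : V₀ → V₁}

theorem IsCommonMatching.apply_notMem_image_of_extends [DecidableEq V₁]
    (hψ : IsCommonMatching G₀ G₁ S₀' ψ) (hsub : S₀ ⊆ S₀') (hagree : ∀ u ∈ S₀, ψ u = φ u)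
    {v : V₀} (hv : v ∈ S₀') (hvS : v ∉ S₀) : ψ v ∉ S₀.image φ := by
  rintro hmem
  obtain ⟨u, hu, hφu⟩ := mem_image.1 hmem
  have : v = u := hψ.1 (mem_coe.2 hv) (mem_coe.2 (hsub hu)) (by rw [hagree u hu, hφu])
  exact hvS (this ▸ hu)

theorem IsCommonMatching.adj_iff_of_extends
    (hψ : IsCommonMatching G₀ G₁ S₀' ψ) (hsub : S₀ ⊆ S₀') (hagree : ∀ u ∈ S₀, ψ u = φ u)
    {v u : V₀} (hv : v ∈ S₀') (hu : u ∈ S₀) : G₀.Adj v u ↔ G₁.Adj (ψ v) (φ u) := by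
  rw [← hagree u hu]
  exact hψ.2 v hv u (hsub hu)

end Extension

theorem bidomain_bound_sound_general {V₀ V₁ : Type*}
    [Fintype V₀] [Fintype V₁] [DecidableEq V₀] [DecidableEq V₁]
    (G₀ : SimpleGraph V₀) (G₁ : SimpleGraph V₁)
    [DecidableRel G₀.Adj] [DecidableRel G₁.Adj]
    (S₀ : Finset V₀) (φ : V₀ → V₁)
    -- the label of an unmatched vertex of `G₀` w.r.t. `(S₀, φ)`
    (lab₀ : V₀ → (↥S₀ → Bool)) (hlab₀ : ∀ v u, lab₀ v u = decide (G₀.Adj v ↑u))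
    -- the label of an unmatched vertex of `G₁` w.r.t. `(S₀, φ)`
    (lab₁ : V₁ → (↥S₀ → Bool)) (hlab₁ : ∀ w u, lab₁ w u = decide (G₁.Adj w (φ ↑u)))
    -- the two sides of the bidomain (label class) of label `c`
    (Lcell : (↥S₀ → Bool) → Finset V₀)
    (hLcell : ∀ c, Lcell c = Finset.univ.filter (fun v => v ∉ S₀ ∧ lab₀ v = c))
    (Rcell : (↥S₀ → Bool) → Finset V₁)
    (hRcell : ∀ c, Rcell c = Finset.univ.filter (fun w => w ∉ S₀.image φ ∧ lab₁ w = c)) :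
    ∀ (S₀' : Finset V₀) (ψ : V₀ → V₁),
      IsCommonMatching G₀ G₁ S₀' ψ → S₀ ⊆ S₀' → (∀ u ∈ S₀, ψ u = φ u) →
        S₀'.card ≤ S₀.card + ∑ c : (↥S₀ → Bool), min (Lcell c).card (Rcell c).card := by
  intro S₀' ψ hψ hsub hagree
  rw [← card_sdiff_add_card_eq_card hsub, add_comm]
  refine Nat.add_le_add_left (card_le_sum_min_of_mapsTo_cells
    (hψ.1.mono sdiff_subset) lab₀ Lcell Rcell (fun v hv => ?_) (fun v hv => ?_)) _
  all_goals obtain ⟨hv', hvS⟩ := mem_sdiff.1 hv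
  · simp [hLcell, hvS]
  · have hlab : lab₁ (ψ v) = lab₀ v := funext fun u => by
      rw [hlab₁, hlab₀, decide_eq_decide, hψ.adj_iff_of_extends hsub hagree hv' u.2]
    simp only [hRcell, mem_filter, mem_univ, true_and]
    exact ⟨hψ.apply_notMem_image_of_extends hsub hagree hv' hvS, hlab⟩

theorem bidomain_bound_sound {V₀ V₁ : Type*}
    [Fintype V₀] [Fintype V₁] [DecidableEq V₀] [DecidableEq V₁]
    (G₀ : SimpleGraph V₀) (G₁ : SimpleGraph V₁)
    [DecidableRel G₀.Adj] [DecidableRel G₁.Adj]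
    (S₀ : Finset V₀) (φ : V₀ → V₁)
    (hmatch : IsCommonMatching G₀ G₁ S₀ φ)
    -- the label of an unmatched vertex of `G₀` w.r.t. `(S₀, φ)`
    (lab₀ : V₀ → (↥S₀ → Bool)) (hlab₀ : ∀ v u, lab₀ v u = decide (G₀.Adj v ↑u))
    -- the label of an unmatched vertex of `G₁` w.r.t. `(S₀, φ)`
    (lab₁ : V₁ → (↥S₀ → Bool)) (hlab₁ : ∀ w u, lab₁ w u = decide (G₁.Adj w (φ ↑u)))
    -- the two sides of the bidomain (label class) of label `c`
    (Lcell : (↥S₀ → Bool) → Finset V₀)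
    (hLcell : ∀ c, Lcell c = Finset.univ.filter (fun v => v ∉ S₀ ∧ lab₀ v = c))
    (Rcell : (↥S₀ → Bool) → Finset V₁)
    (hRcell : ∀ c, Rcell c = Finset.univ.filter (fun w => w ∉ S₀.image φ ∧ lab₁ w = c)) :
    ∀ (S₀' : Finset V₀) (ψ : V₀ → V₁),
      IsCommonMatching G₀ G₁ S₀' ψ → S₀ ⊆ S₀' → (∀ u ∈ S₀, ψ u = φ u) →
        S₀'.card ≤ S₀.card + ∑ c : (↥S₀ → Bool), min (Lcell c).card (Rcell c).card :=
  bidomain_bound_sound_general G₀ G₁ S₀ φ lab₀ hlab₀ lab₁ hlab₁ Lcell hLcell Rcell hRcell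
end

section
/- Let (S₀, φ) be a common induced subgraph matching of (G₀, G₁) with p ∈ S₀ and q = φ(p), let ℓ₀ ∈ V₀ \ S₀ be a leaf of G₀ attached to p, and let ℓ₁ ∈ V₁ \ φ(S₀) be a leaf of G₁ attached to q. If the subgraph of G₀ induced on S₀ is connected and the subgraph of G₁ induced on φ(S₀) is connected, then (S₀ ∪ {ℓ₀}, φ') — where φ' agrees with φ on S₀ and φ'(ℓ₀) = ℓ₁ — is a common induced subgraph matching of size |S₀| + 1 such that the subgraph of G₀ induced on S₀ ∪ {ℓ₀} and the subgraph of G₁ induced on φ(S₀) ∪ {ℓ₁} are both connected. (Hence the leaf-union-match operation is also valid for the maximum common connected induced subgraph problem.) -/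
lemma induce_insert_connected {V : Type*} (G : SimpleGraph V) (s : Set V) (a b : V)
    (hb : b ∈ s) (hab : G.Adj a b) (hc : (G.induce s).Connected) :
    (G.induce (insert a s)).Connected := by
  have hsub : s ⊆ insert a s := Set.subset_insert a s
  rw [SimpleGraph.connected_iff]
  refine ⟨?_, ⟨⟨a, Set.mem_insert a s⟩⟩⟩
  intro x y
  have key : ∀ z : (insert a s : Set V), (G.induce (insert a s)).Reachable z ⟨b, hsub hb⟩ := by
    rintro ⟨z, hz⟩
    rcases hz with rfl | hz
    · exact SimpleGraph.Adj.reachable (by simpa using hab)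
    · exact SimpleGraph.Reachable.map (SimpleGraph.induceHom SimpleGraph.Hom.id (fun x hx => hsub hx)) (hc.preconnected ⟨z, hz⟩ ⟨b, hb⟩)
  exact (key x).trans (key y).symm

theorem leaf_union_match_connected {V₀ V₁ : Type*} [DecidableEq V₀] [DecidableEq V₁]
    (G₀ : SimpleGraph V₀) (G₁ : SimpleGraph V₁)
    (S₀ : Finset V₀) (φ : V₀ → V₁)
    (hmatch : IsCommonMatching G₀ G₁ S₀ φ)
    (p : V₀) (hp : p ∈ S₀) (q : V₁) (hq : q = φ p)
    (ℓ₀ : V₀) (hℓ₀notin : ℓ₀ ∉ S₀) (hℓ₀leaf : IsLeafAt G₀ p ℓ₀)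
    (ℓ₁ : V₁) (hℓ₁notin : ℓ₁ ∉ S₀.image φ) (hℓ₁leaf : IsLeafAt G₁ q ℓ₁)
    (hconn₀ : (G₀.induce (↑S₀ : Set V₀)).Connected)
    (hconn₁ : (G₁.induce (φ '' (↑S₀ : Set V₀))).Connected)
    (φ' : V₀ → V₁) (hagree : ∀ u ∈ S₀, φ' u = φ u) (hℓ : φ' ℓ₀ = ℓ₁) :
    IsCommonMatching G₀ G₁ (insert ℓ₀ S₀) φ' ∧
      (insert ℓ₀ S₀).card = S₀.card + 1 ∧
      (G₀.induce (↑(insert ℓ₀ S₀) : Set V₀)).Connected ∧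
      (G₁.induce (insert ℓ₁ (φ '' (↑S₀ : Set V₀)))).Connected := by
  obtain ⟨hinj, hadj⟩ := hmatch
  obtain ⟨hne₀, hadj₀, huniq₀⟩ := hℓ₀leaf
  obtain ⟨hne₁, hadj₁, huniq₁⟩ := hℓ₁leaf
  have hℓ₁notin' : ℓ₁ ∉ φ '' (↑S₀ : Set V₀) := by
    simpa [Finset.mem_image, Set.mem_image] using hℓ₁notin
  -- key adjacency characterizations
  have key₀ : ∀ v ∈ S₀, (G₀.Adj ℓ₀ v ↔ v = p) := fun v _ =>
    ⟨huniq₀ v, fun h => h ▸ hadj₀⟩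
  have key₁ : ∀ v ∈ S₀, (G₁.Adj ℓ₁ (φ v) ↔ v = p) := by
    intro v hv
    constructor
    · intro h
      have := huniq₁ (φ v) h
      exact hinj hv hp (hq ▸ this)
    · rintro rfl; exact hq ▸ hadj₁
  have hmatch' : IsCommonMatching G₀ G₁ (insert ℓ₀ S₀) φ' := by
    constructor
    · intro u hu v hv huv
      simp only [Finset.coe_insert, Set.mem_insert_iff, Finset.mem_coe] at hu hv
      rcases hu with rfl | hu <;> rcases hv with rfl | hv
      · rfl
      · exfalso; apply hℓ₁notin'
        exact ⟨v, hv, by rw [← hagree v hv, ← huv, hℓ]⟩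
      · exfalso; apply hℓ₁notin'
        exact ⟨u, hu, by rw [← hagree u hu, huv, hℓ]⟩
      · exact hinj hu hv (by rwa [hagree u hu, hagree v hv] at huv)
    · intro u hu v hv
      simp only [Finset.mem_insert] at hu hv
      rcases hu with rfl | hu <;> rcases hv with rfl | hv
      · simp [SimpleGraph.irrefl]
      · rw [hℓ, hagree v hv, key₀ v hv, key₁ v hv]
      · rw [hℓ, hagree u hu, G₀.adj_comm, G₁.adj_comm, key₀ u hu, key₁ u hu]
      · rw [hagree u hu, hagree v hv]; exact hadj u hu v hv
  refine ⟨hmatch', Finset.card_insert_of_notMem hℓ₀notin, ?_, ?_⟩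
  · have := induce_insert_connected G₀ (↑S₀) ℓ₀ p hp hadj₀ hconn₀
    rwa [Finset.coe_insert]
  · exact induce_insert_connected G₁ _ ℓ₁ (φ p) ⟨p, hp, rfl⟩ (hq ▸ hadj₁) hconn₁
end
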